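/- arXiv:1505.00905 — 2 statements merged into one kernel-verified Lean document; each statement's English description precedes it below -/
import Mathlib

section
/- Let q>1 and σ>1 be real numbers, and let f:(0,∞)→[0,∞) be measurable. Define F(r)=∫₀^r f(t)dt. Then ∫₀^∞ r^{-σ} F(r)^q dr ≤ (q/(σ-1))^q ∫₀^∞ r^{-σ} (r f(r))^q dr. -/
open MeasureTheory Set
open scoped ENNReal

/-! Write `σ = δ q + 1` with `δ > 0`. Hölder's inequality on `(0, r)` against the weight
`t ^ (δ - 1)`, whose integral is `r ^ δ / δ`, gives
`F(r) ^ q ≤ (r ^ δ / δ) ^ (q - 1) ∫₀ʳ f(t) ^ q t ^ ((δ - 1)(1 - q)) dt`.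
Multiplying by `r ^ (-σ)` leaves the kernel `r ^ (-δ - 1)`; after exchanging the order of
integration, `∫ₜ^∞ r ^ (-δ - 1) dr = t ^ (-δ) / δ` turns the right-hand side into
`δ ^ (-q) ∫₀^∞ t ^ (q - σ) f(t) ^ q dt`, and `δ⁻¹ = q / (σ - 1)`. -/

theorem rpow_lintegral_le_lintegral_weight_mul_lintegral {α : Type*} [MeasurableSpace α]
    {μ : Measure α} {p : ℝ} (hp : 1 < p) {f w : α → ℝ≥0∞} (hf : AEMeasurable f μ)
    (hw : AEMeasurable w μ) (hw0 : ∀ᵐ x ∂μ, w x ≠ 0) (hw_top : ∀ᵐ x ∂μ, w x ≠ ∞) :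
    (∫⁻ x, f x ∂μ) ^ p ≤ (∫⁻ x, w x ∂μ) ^ (p - 1) * ∫⁻ x, f x ^ p * w x ^ (1 - p) ∂μ := by
  have hp0 : 0 < p := zero_lt_one.trans hp
  have hpq : p.HolderConjugate (p / (p - 1)) := .conjExponent hp
  set g : α → ℝ≥0∞ := fun x => f x * w x ^ ((1 - p) / p)
  set v : α → ℝ≥0∞ := fun x => w x ^ ((p - 1) / p)
  have hf_eq : ∫⁻ x, f x ∂μ = ∫⁻ x, (g * v) x ∂μ := by
    refine lintegral_congr_ae ?_
    filter_upwards [hw0, hw_top] with x h0 htop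
    rw [Pi.mul_apply, mul_assoc, ← ENNReal.rpow_add _ _ h0 htop, ← add_div]
    simp
  have hg_eq : ∫⁻ x, g x ^ p ∂μ = ∫⁻ x, f x ^ p * w x ^ (1 - p) ∂μ := by
    refine lintegral_congr fun x => ?_
    rw [ENNReal.mul_rpow_of_nonneg _ _ hp0.le, ← ENNReal.rpow_mul, div_mul_cancel₀ _ hp0.ne']
  have hv_eq : ∫⁻ x, v x ^ (p / (p - 1)) ∂μ = ∫⁻ x, w x ∂μ := by
    refine lintegral_congr fun x => ?_
    rw [← ENNReal.rpow_mul, div_mul_div_cancel₀ hp0.ne', div_self (sub_pos.2 hp).ne',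
      ENNReal.rpow_one]
  have holder := ENNReal.lintegral_mul_le_Lp_mul_Lq μ hpq (f := g) (g := v)
    (hf.mul (hw.pow_const ((1 - p) / p))) (hw.pow_const ((p - 1) / p))
  rw [← hf_eq, hg_eq, hv_eq] at holder
  calc (∫⁻ x, f x ∂μ) ^ p
      ≤ ((∫⁻ x, f x ^ p * w x ^ (1 - p) ∂μ) ^ (1 / p) *
          (∫⁻ x, w x ∂μ) ^ (1 / (p / (p - 1)))) ^ p := by
        gcongr
    _ = (∫⁻ x, w x ∂μ) ^ (p - 1) * ∫⁻ x, f x ^ p * w x ^ (1 - p) ∂μ := by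
        rw [ENNReal.mul_rpow_of_nonneg _ _ hp0.le, ← ENNReal.rpow_mul, ← ENNReal.rpow_mul,
          one_div_mul_cancel hp0.ne', ENNReal.rpow_one, mul_comm]
        congr 2
        field_simp

theorem lintegral_Ioi_mul_lintegral_Ioo (μ : Measure ℝ) [SFinite μ] (a : ℝ) {g h : ℝ → ℝ≥0∞}
    (hg : Measurable g) (hh : Measurable h) :
    ∫⁻ x in Ioi a, h x * ∫⁻ t in Ioo a x, g t ∂μ ∂μ =
      ∫⁻ t in Ioi a, g t * ∫⁻ x in Ioi t, h x ∂μ ∂μ := by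
  have hk : Measurable (Function.uncurry fun x t => (Iio x).indicator g t * h x) :=
    ((hg.comp measurable_snd).indicator (measurableSet_lt measurable_snd measurable_fst)).mul
      (hh.comp measurable_fst)
  calc ∫⁻ x in Ioi a, h x * ∫⁻ t in Ioo a x, g t ∂μ ∂μ
      = ∫⁻ x in Ioi a, ∫⁻ t in Ioi a, (Iio x).indicator g t * h x ∂μ ∂μ := by
        refine lintegral_congr fun x => ?_
        rw [lintegral_mul_const _ (hg.indicator measurableSet_Iio), mul_comm,
          lintegral_indicator measurableSet_Iio, Measure.restrict_restrict measurableSet_Iio,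
          Iio_inter_Ioi]
    _ = ∫⁻ t in Ioi a, ∫⁻ x in Ioi a, g t * (Ioi t).indicator h x ∂μ ∂μ := by
        rw [lintegral_lintegral_swap hk.aemeasurable]
        refine lintegral_congr fun t => lintegral_congr fun x => ?_
        by_cases htx : t < x <;> simp [htx]
    _ = ∫⁻ t in Ioi a, g t * ∫⁻ x in Ioi t, h x ∂μ ∂μ := by
        refine setLIntegral_congr_fun measurableSet_Ioi fun t (ht : a < t) => ?_
        rw [lintegral_const_mul _ (hh.indicator measurableSet_Ioi),
          lintegral_indicator measurableSet_Ioi, Measure.restrict_restrict measurableSet_Ioi,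
          Ioi_inter_Ioi, sup_eq_left.2 ht.le]

theorem lintegral_Ioo_zero_ofReal_rpow_sub_one {c r : ℝ} (hc : 0 < c) (hr : 0 < r) :
    ∫⁻ t in Ioo 0 r, ENNReal.ofReal t ^ (c - 1) = ENNReal.ofReal r ^ c / ENNReal.ofReal c := by
  have hint : IntegrableOn (fun t : ℝ => t ^ (c - 1)) (Ioo 0 r) :=
    (intervalIntegral.intervalIntegrable_rpow' (a := 0) (b := r) (by linarith)).1.mono_set
      Ioo_subset_Ioc_self
  rw [setLIntegral_congr_fun measurableSet_Ioo fun t ht => ENNReal.ofReal_rpow_of_pos ht.1,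
    ← ofReal_integral_eq_lintegral_ofReal hint
      ((ae_restrict_iff' measurableSet_Ioo).2 (.of_forall fun t ht => Real.rpow_nonneg ht.1.le _)),
    ← integral_Ioc_eq_integral_Ioo, ← intervalIntegral.integral_of_le hr.le,
    integral_rpow (Or.inl (by linarith)), sub_add_cancel, Real.zero_rpow hc.ne', sub_zero,
    ENNReal.ofReal_div_of_pos hc, ENNReal.ofReal_rpow_of_pos hr]

theorem lintegral_Ioi_ofReal_rpow_neg_sub_one {c t : ℝ} (hc : 0 < c) (ht : 0 < t) :
    ∫⁻ x in Ioi t, ENNReal.ofReal x ^ (-c - 1) = ENNReal.ofReal t ^ (-c) / ENNReal.ofReal c := by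
  have hc1 : -c - 1 < -1 := by linarith
  rw [setLIntegral_congr_fun measurableSet_Ioi fun x hx =>
      ENNReal.ofReal_rpow_of_pos (ht.trans hx),
    ← ofReal_integral_eq_lintegral_ofReal (integrableOn_Ioi_rpow_of_lt hc1 ht)
      ((ae_restrict_iff' measurableSet_Ioi).2
        (.of_forall fun x hx => Real.rpow_nonneg (ht.trans hx).le _)),
    integral_Ioi_rpow_of_lt hc1 ht, sub_add_cancel, div_neg, neg_div, neg_neg,
    ENNReal.ofReal_div_of_pos hc, ENNReal.ofReal_rpow_of_pos ht]

theorem rpow_lintegral_Ioo_zero_le {q δ r : ℝ} (hq : 1 < q) (hδ : 0 < δ) (hr : 0 < r)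
    {f : ℝ → ℝ≥0∞} (hf : Measurable f) :
    (∫⁻ t in Ioo 0 r, f t) ^ q ≤ (ENNReal.ofReal r ^ δ / ENNReal.ofReal δ) ^ (q - 1) *
      ∫⁻ t in Ioo 0 r, f t ^ q * ENNReal.ofReal t ^ ((δ - 1) * (1 - q)) := by
  have hw0 : ∀ᵐ t ∂volume.restrict (Ioo 0 r), ENNReal.ofReal t ^ (δ - 1) ≠ 0 :=
    (ae_restrict_iff' measurableSet_Ioo).2 (.of_forall fun t ht =>
      (ENNReal.rpow_pos (ENNReal.ofReal_pos.2 ht.1) ENNReal.ofReal_ne_top).ne')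
  have hw_top : ∀ᵐ t ∂volume.restrict (Ioo 0 r), ENNReal.ofReal t ^ (δ - 1) ≠ ∞ :=
    (ae_restrict_iff' measurableSet_Ioo).2 (.of_forall fun t ht =>
      ENNReal.rpow_ne_top_of_nonneg' (ENNReal.ofReal_pos.2 ht.1) ENNReal.ofReal_ne_top)
  have key := rpow_lintegral_le_lintegral_weight_mul_lintegral hq hf.aemeasurable
    (by fun_prop) hw0 hw_top
  simp_rw [← ENNReal.rpow_mul] at key
  rwa [lintegral_Ioo_zero_ofReal_rpow_sub_one hδ hr] at key

theorem ofReal_rpow_mul_rpow_lintegral_Ioo_zero_le {q δ r : ℝ} (hq : 1 < q) (hδ : 0 < δ)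
    (hr : 0 < r) {f : ℝ → ℝ≥0∞} (hf : Measurable f) :
    ENNReal.ofReal r ^ (-(δ * q + 1)) * (∫⁻ t in Ioo 0 r, f t) ^ q ≤
      (ENNReal.ofReal δ)⁻¹ ^ (q - 1) * (ENNReal.ofReal r ^ (-δ - 1) *
        ∫⁻ t in Ioo 0 r, f t ^ q * ENNReal.ofReal t ^ ((δ - 1) * (1 - q))) := by
  have hR0 : ENNReal.ofReal r ≠ 0 := (ENNReal.ofReal_pos.2 hr).ne'
  calc ENNReal.ofReal r ^ (-(δ * q + 1)) * (∫⁻ t in Ioo 0 r, f t) ^ q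
      ≤ ENNReal.ofReal r ^ (-(δ * q + 1)) * ((ENNReal.ofReal r ^ δ / ENNReal.ofReal δ) ^ (q - 1) *
          ∫⁻ t in Ioo 0 r, f t ^ q * ENNReal.ofReal t ^ ((δ - 1) * (1 - q))) := by
        gcongr
        exact rpow_lintegral_Ioo_zero_le hq hδ hr hf
    _ = (ENNReal.ofReal δ)⁻¹ ^ (q - 1) * (ENNReal.ofReal r ^ (-(δ * q + 1) + δ * (q - 1)) *
          ∫⁻ t in Ioo 0 r, f t ^ q * ENNReal.ofReal t ^ ((δ - 1) * (1 - q))) := by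
        rw [div_eq_mul_inv, ENNReal.mul_rpow_of_nonneg _ _ (by linarith), ← ENNReal.rpow_mul,
          ENNReal.rpow_add _ _ hR0 ENNReal.ofReal_ne_top]
        ring
    _ = _ := by rw [show -(δ * q + 1) + δ * (q - 1) = -δ - 1 by ring]

theorem rpow_mul_ofReal_rpow_mul_lintegral_Ioi_eq {q δ t : ℝ} (hq : 0 ≤ q) (hδ : 0 < δ)
    (ht : 0 < t) (a : ℝ≥0∞) :
    a ^ q * ENNReal.ofReal t ^ ((δ - 1) * (1 - q)) * ∫⁻ x in Ioi t, ENNReal.ofReal x ^ (-δ - 1) =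
      (ENNReal.ofReal δ)⁻¹ * (ENNReal.ofReal t ^ (-(δ * q + 1)) * (ENNReal.ofReal t * a) ^ q) := by
  have hT0 : ENNReal.ofReal t ≠ 0 := (ENNReal.ofReal_pos.2 ht).ne'
  rw [lintegral_Ioi_ofReal_rpow_neg_sub_one hδ ht, div_eq_mul_inv,
    ENNReal.mul_rpow_of_nonneg _ _ hq]
  calc _ = (ENNReal.ofReal δ)⁻¹ * (ENNReal.ofReal t ^ ((δ - 1) * (1 - q) + -δ) * a ^ q) := by
        rw [ENNReal.rpow_add _ _ hT0 ENNReal.ofReal_ne_top]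
        ring
    _ = (ENNReal.ofReal δ)⁻¹ * (ENNReal.ofReal t ^ (-(δ * q + 1) + q) * a ^ q) := by
        rw [show (δ - 1) * (1 - q) + -δ = -(δ * q + 1) + q by ring]
    _ = _ := by
        rw [ENNReal.rpow_add _ _ hT0 ENNReal.ofReal_ne_top]
        ring

/-- **1D Hardy inequality** (Hardy–Littlewood–Pólya, Thm 330), case `σ > 1`:
for `q > 1`, `σ > 1` and a measurable `f : (0,∞) → [0,∞]`, with
`F r = ∫₀^r f(t) dt`, one has
`∫₀^∞ r^{-σ} F(r)^q dr ≤ (q/(σ-1))^q ∫₀^∞ r^{-σ} (r f(r))^q dr`. -/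
theorem hardy_inequality_sigma_gt_one (q σ : ℝ) (hq : 1 < q) (hσ : 1 < σ)
    (f : ℝ → ℝ≥0∞) (hf : Measurable f)
    (F : ℝ → ℝ≥0∞) (hF : ∀ r, F r = ∫⁻ t in Set.Ioo (0 : ℝ) r, f t) :
    ∫⁻ r in Set.Ioi (0 : ℝ), (ENNReal.ofReal r) ^ (-σ) * (F r) ^ q ≤
      ENNReal.ofReal ((q / (σ - 1)) ^ q) *
        ∫⁻ r in Set.Ioi (0 : ℝ),
          (ENNReal.ofReal r) ^ (-σ) * (ENNReal.ofReal r * f r) ^ q := by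
  have hq0 : 0 < q := by linarith
  obtain ⟨δ, hδ, rfl⟩ : ∃ δ > 0, σ = δ * q + 1 :=
    ⟨(σ - 1) / q, div_pos (by linarith) hq0, by field_simp; ring⟩
  set C := (ENNReal.ofReal δ)⁻¹
  have hC0 : C ≠ 0 := ENNReal.inv_ne_zero.2 ENNReal.ofReal_ne_top
  have hC_top : C ≠ ∞ := ENNReal.inv_ne_top.2 (ENNReal.ofReal_pos.2 hδ).ne'
  calc _ ≤ ∫⁻ r in Ioi 0, C ^ (q - 1) * (ENNReal.ofReal r ^ (-δ - 1) *
          ∫⁻ t in Ioo 0 r, f t ^ q * ENNReal.ofReal t ^ ((δ - 1) * (1 - q))) :=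
        setLIntegral_mono' measurableSet_Ioi fun r hr =>
          hF r ▸ ofReal_rpow_mul_rpow_lintegral_Ioo_zero_le hq hδ hr hf
    _ = C ^ (q - 1) * ∫⁻ t in Ioi 0, f t ^ q * ENNReal.ofReal t ^ ((δ - 1) * (1 - q)) *
          ∫⁻ x in Ioi t, ENNReal.ofReal x ^ (-δ - 1) := by
        rw [lintegral_const_mul' _ _ (ENNReal.rpow_ne_top_of_nonneg (by linarith) hC_top),
          lintegral_Ioi_mul_lintegral_Ioo _ _ (by fun_prop) (by fun_prop)]
    _ = C ^ (q - 1) * C * ∫⁻ r in Ioi 0,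
          ENNReal.ofReal r ^ (-(δ * q + 1)) * (ENNReal.ofReal r * f r) ^ q := by
        rw [setLIntegral_congr_fun measurableSet_Ioi fun t ht =>
            rpow_mul_ofReal_rpow_mul_lintegral_Ioi_eq hq0.le hδ ht (f t),
          lintegral_const_mul' _ _ hC_top, mul_assoc]
    _ = _ := by
        nth_rw 2 [← ENNReal.rpow_one C]
        rw [← ENNReal.rpow_add _ _ hC0 hC_top, sub_add_cancel,
          show q / (δ * q + 1 - 1) = δ⁻¹ by field_simp; ring, ← ENNReal.ofReal_rpow_of_pos
            (inv_pos.2 hδ), ENNReal.ofReal_inv_of_pos hδ]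
end

section
/- Let u^θ(r,x₃) and ω³(r,x₃) be smooth functions on (0,∞)×ℝ vanishing appropriately at r=0 and r=∞, related by ω³ = ∂_r u^θ + u^θ/r, i.e. r u^θ(r,x₃) = ∫₀^r s ω³(s,x₃) ds. Then for every q>1 there is a constant C(q) such that for each fixed x₃, ∫₀^∞ (u^θ/r)^q r dr ≤ C(q)^q ∫₀^∞ |ω³|^q r dr, and hence ‖u^θ/r‖_{L^q(ℝ³)} ≤ C(q) ‖ω³‖_{L^q(ℝ³)} for axisymmetric functions. -/
open MeasureTheory Set
open scoped ENNReal

/-!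
Write `F(r) = r u^θ(r) = ∫₀^r s ω³(s) ds`. Hölder on `(0, r)` gives
`|F(r)|^q ≤ r^(q-1) ∫₀^r |s ω³(s)|^q ds`, hence
`|u^θ/r|^q r = r^(1-2q) |F|^q ≤ r^(-q) ∫₀^r |s ω³|^q ds`.
Integrating in `r` and swapping the order of integration, `∫_s^∞ r^(-q) dr = s^(1-q)/(q-1)`
turns the right side into `(q-1)⁻¹ ∫₀^∞ |ω³|^q s ds`, so `C(q) = (q-1)^(-1/q)`.
-/

theorem enorm_integral_rpow_le {α E : Type*} [MeasurableSpace α] [NormedAddCommGroup E]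
    [NormedSpace ℝ E] {μ : Measure α} {f : α → E} (hf : AEStronglyMeasurable f μ) {q : ℝ}
    (hq : 1 < q) :
    ‖∫ x, f x ∂μ‖ₑ ^ q ≤ μ univ ^ (q - 1) * ∫⁻ x, ‖f x‖ₑ ^ q ∂μ := by
  have hq₀ : 0 ≤ q := by linarith
  have holder := ENNReal.lintegral_mul_le_Lp_mul_Lq μ (Real.HolderConjugate.conjExponent hq)
    hf.enorm (aemeasurable_const (b := 1))
  simp only [Pi.mul_apply, mul_one, ENNReal.one_rpow, lintegral_const, one_mul] at holder
  calc ‖∫ x, f x ∂μ‖ₑ ^ q ≤ (∫⁻ x, ‖f x‖ₑ ∂μ) ^ q := by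
        gcongr; exact enorm_integral_le_lintegral_enorm f
    _ ≤ ((∫⁻ x, ‖f x‖ₑ ^ q ∂μ) ^ (1 / q) * μ univ ^ (1 / q.conjExponent)) ^ q := by gcongr
    _ = μ univ ^ (q - 1) * ∫⁻ x, ‖f x‖ₑ ^ q ∂μ := by
        rw [ENNReal.mul_rpow_of_nonneg _ _ hq₀, ← ENNReal.rpow_mul, ← ENNReal.rpow_mul,
          one_div_mul_cancel (by linarith), ENNReal.rpow_one, mul_comm, Real.conjExponent]
        congr 2
        field_simp

theorem lintegral_Ioi_rpow_neg {q : ℝ} (hq : 1 < q) {s : ℝ} (hs : 0 < s) :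
    ∫⁻ r in Ioi s, ENNReal.ofReal (r ^ (-q)) = ENNReal.ofReal (s ^ (1 - q) / (q - 1)) := by
  rw [← ofReal_integral_eq_lintegral_ofReal (integrableOn_Ioi_rpow_of_lt (by linarith) hs)
      ((ae_restrict_mem measurableSet_Ioi).mono fun r hr => Real.rpow_nonneg (hs.trans hr).le _),
    integral_Ioi_rpow_of_lt (by linarith) hs, ← neg_div_neg_eq]
  ring_nf

theorem setLIntegral_Ioi_mul_setLIntegral_Ioo {μ : Measure ℝ} [SFinite μ] {E g : ℝ → ℝ≥0∞}
    (hE : Measurable E) (hg : Measurable g) (a : ℝ) :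
    ∫⁻ r in Ioi a, E r * ∫⁻ s in Ioo a r, g s ∂μ ∂μ =
      ∫⁻ s in Ioi a, (∫⁻ r in Ioi s, E r ∂μ) * g s ∂μ := by
  set Φ : ℝ → ℝ → ℝ≥0∞ := fun r s => (Ioo a r).indicator (fun s => E r * g s) s
  have hΦ : Measurable (Function.uncurry Φ) := by
    have hA : MeasurableSet {p : ℝ × ℝ | a < p.2 ∧ p.2 < p.1} :=
      (measurableSet_lt measurable_const measurable_snd).inter
        (measurableSet_lt measurable_snd measurable_fst)
    exact ((hE.comp measurable_fst).mul (hg.comp measurable_snd)).indicator hA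
  have hleft : ∀ r, ∫⁻ s, Φ r s ∂μ = E r * ∫⁻ s in Ioo a r, g s ∂μ := fun r => by
    rw [lintegral_indicator measurableSet_Ioo, lintegral_const_mul _ hg]
  have hright : ∀ s ∈ Ioi a, ∫⁻ r, Φ r s ∂μ = (∫⁻ r in Ioi s, E r ∂μ) * g s := fun s hs => by
    rw [← lintegral_mul_const _ hE, ← lintegral_indicator measurableSet_Ioi]
    congr 1 with r
    simp only [Φ, indicator_apply, mem_Ioo, mem_Ioi]
    grind
  calc ∫⁻ r in Ioi a, E r * ∫⁻ s in Ioo a r, g s ∂μ ∂μ = ∫⁻ r, ∫⁻ s, Φ r s ∂μ ∂μ := by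
        simp_rw [← hleft]
        refine setLIntegral_eq_of_support_subset <|
          Function.support_subset_iff'.2 fun r hr => ?_
        rw [hleft, Ioo_eq_empty hr, Measure.restrict_empty,
          lintegral_zero_measure, mul_zero]
    _ = ∫⁻ s, ∫⁻ r, Φ r s ∂μ ∂μ := lintegral_lintegral_swap hΦ.aemeasurable
    _ = ∫⁻ s in Ioi a, ∫⁻ r, Φ r s ∂μ ∂μ := by
        refine (setLIntegral_eq_of_support_subset <|
          Function.support_subset_iff'.2 fun s hs => ?_).symm
        have hs : ∀ r, s ∉ Ioo a r := fun r h => hs h.1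
        simp [Φ, hs]
    _ = ∫⁻ s in Ioi a, (∫⁻ r in Ioi s, E r ∂μ) * g s ∂μ :=
        setLIntegral_congr_fun measurableSet_Ioi hright

theorem abs_div_rpow_mul_eq {q r : ℝ} (hr : 0 < r) (U : ℝ) :
    |U / r| ^ q * r = r ^ (1 - 2 * q) * |r * U| ^ q := by
  rw [abs_div, abs_mul, abs_of_pos hr, Real.div_rpow (abs_nonneg _) hr.le,
    Real.mul_rpow hr.le (abs_nonneg _), Real.rpow_sub hr, Real.rpow_one, mul_comm 2 q, Real.rpow_mul hr.le,
    Real.rpow_two]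
  field_simp

theorem ofReal_abs_div_rpow_mul_le {q r U : ℝ} (hq : 1 < q) (hr : 0 < r) {f : ℝ → ℝ}
    (hf : AEStronglyMeasurable f) (hU : r * U = ∫ s in Ioo 0 r, f s) :
    ENNReal.ofReal (|U / r| ^ q * r) ≤
      ENNReal.ofReal (r ^ (-q)) * ∫⁻ s in Ioo 0 r, ‖f s‖ₑ ^ q := by
  have holder := enorm_integral_rpow_le hf.restrict hq (μ := volume.restrict (Ioo 0 r))
  rw [← hU, Measure.restrict_apply_univ, Real.volume_Ioo, sub_zero, Real.enorm_eq_ofReal_abs,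
    ENNReal.ofReal_rpow_of_nonneg (abs_nonneg _) (by linarith),
    ENNReal.ofReal_rpow_of_nonneg hr.le (by linarith)] at holder
  calc ENNReal.ofReal (|U / r| ^ q * r)
      = ENNReal.ofReal (r ^ (1 - 2 * q)) * ENNReal.ofReal (|r * U| ^ q) := by
        rw [abs_div_rpow_mul_eq hr, ENNReal.ofReal_mul (by positivity)]
    _ ≤ ENNReal.ofReal (r ^ (1 - 2 * q)) *
          (ENNReal.ofReal (r ^ (q - 1)) * ∫⁻ s in Ioo 0 r, ‖f s‖ₑ ^ q) := by gcongr
    _ = ENNReal.ofReal (r ^ (-q)) * ∫⁻ s in Ioo 0 r, ‖f s‖ₑ ^ q := by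
        rw [← mul_assoc, ← ENNReal.ofReal_mul (by positivity), ← Real.rpow_add hr]
        ring_nf

theorem setLIntegral_abs_div_rpow_mul_le {q : ℝ} (hq : 1 < q) {u ω : ℝ → ℝ} (hω : Measurable ω)
    (huω : ∀ r > 0, r * u r = ∫ s in Ioo 0 r, s * ω s) :
    ∫⁻ r in Ioi 0, ENNReal.ofReal (|u r / r| ^ q * r) ≤
      ENNReal.ofReal (q - 1)⁻¹ * ∫⁻ r in Ioi 0, ENNReal.ofReal (|ω r| ^ q * r) := by
  have hf : Measurable fun s => s * ω s := measurable_id.mul hω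
  calc ∫⁻ r in Ioi 0, ENNReal.ofReal (|u r / r| ^ q * r)
      ≤ ∫⁻ r in Ioi 0, ENNReal.ofReal (r ^ (-q)) * ∫⁻ s in Ioo 0 r, ‖s * ω s‖ₑ ^ q :=
        setLIntegral_mono' measurableSet_Ioi fun r hr =>
          ofReal_abs_div_rpow_mul_le hq hr hf.aestronglyMeasurable (huω r hr)
    _ = ∫⁻ s in Ioi 0, ENNReal.ofReal (s ^ (1 - q) / (q - 1)) * ‖s * ω s‖ₑ ^ q := by
        rw [setLIntegral_Ioi_mul_setLIntegral_Ioo (by fun_prop) (by fun_prop)]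
        exact setLIntegral_congr_fun measurableSet_Ioi fun s hs => by
          rw [lintegral_Ioi_rpow_neg hq hs]
    _ = ENNReal.ofReal (q - 1)⁻¹ * ∫⁻ s in Ioi 0, ENNReal.ofReal (|ω s| ^ q * s) := by
        rw [← lintegral_const_mul' _ _ ENNReal.ofReal_ne_top]
        refine setLIntegral_congr_fun measurableSet_Ioi fun s (hs : 0 < s) => ?_
        rw [Real.enorm_eq_ofReal_abs, ENNReal.ofReal_rpow_of_nonneg (abs_nonneg _) (by linarith),
          ← ENNReal.ofReal_mul (by have := sub_pos.2 hq; positivity),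
          ← ENNReal.ofReal_mul (by have := sub_pos.2 hq; positivity), abs_mul, abs_of_pos hs,
          Real.mul_rpow hs.le (abs_nonneg _), Real.rpow_sub hs, Real.rpow_one]
        congr 1
        field_simp

/-- **Hardy inequality relating `u^θ/r` to `ω³`**: if the smooth functions
`u^θ(r,x₃)` and `ω³(r,x₃)` are related by `r u^θ(r,x₃) = ∫₀^r s ω³(s,x₃) ds`
(equivalently `ω³ = ∂_r u^θ + u^θ/r`), then for every `q > 1` there is `C(q)`
such that for each fixed `x₃`,
`∫₀^∞ |u^θ/r|^q r dr ≤ C(q)^q ∫₀^∞ |ω³|^q r dr`, and hence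
`‖u^θ/r‖_{L^q(ℝ³)} ≤ C(q) ‖ω³‖_{L^q(ℝ³)}` for axisymmetric functions
(whose `L^q(ℝ³)` norm is `(2π ∫_ℝ ∫₀^∞ |·|^q r dr dx₃)^{1/q}`). -/
theorem angular_velocity_hardy (q : ℝ) (hq : 1 < q) :
    ∃ C > 0, ∀ uθ ω3 : ℝ → ℝ → ℝ,
      Continuous (fun p : ℝ × ℝ => uθ p.1 p.2) →
      Continuous (fun p : ℝ × ℝ => ω3 p.1 p.2) →
      (∀ x₃ : ℝ, ∀ r > 0, r * uθ x₃ r = ∫ s in Set.Ioo 0 r, s * ω3 x₃ s) →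
      ((∀ x₃ : ℝ,
          ∫⁻ r in Set.Ioi (0 : ℝ), ENNReal.ofReal (|uθ x₃ r / r| ^ q * r) ≤
            ENNReal.ofReal C ^ q *
              ∫⁻ r in Set.Ioi (0 : ℝ), ENNReal.ofReal (|ω3 x₃ r| ^ q * r)) ∧
        ∫⁻ x₃ : ℝ, ∫⁻ r in Set.Ioi (0 : ℝ),
            ENNReal.ofReal (|uθ x₃ r / r| ^ q * r) ≤
          ENNReal.ofReal C ^ q *
            ∫⁻ x₃ : ℝ, ∫⁻ r in Set.Ioi (0 : ℝ),
              ENNReal.ofReal (|ω3 x₃ r| ^ q * r)) := by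
  have hq₁ : 0 < q - 1 := sub_pos.2 hq
  refine ⟨(q - 1)⁻¹ ^ q⁻¹, by positivity, fun uθ ω3 _ hω huω => ?_⟩
  rw [ENNReal.ofReal_rpow_of_nonneg (by positivity) (by linarith),
    Real.rpow_inv_rpow (by positivity) (by linarith)]
  have slice x₃ := setLIntegral_abs_div_rpow_mul_le hq
    (hω.comp (Continuous.prodMk_right x₃)).measurable (huω x₃)
  refine ⟨slice, ?_⟩
  calc _ ≤ ∫⁻ x₃, ENNReal.ofReal (q - 1)⁻¹ *
        ∫⁻ r in Ioi 0, ENNReal.ofReal (|ω3 x₃ r| ^ q * r) :=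
        lintegral_mono slice
    _ = _ := lintegral_const_mul' _ _ ENNReal.ofReal_ne_top
end
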